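/- arXiv:2303.04367 — 2 statements merged into one kernel-verified Lean document; each statement's English description precedes it below -/
import Mathlib

section
/- Let ⟨a,b⟩ be an unlocked parabolic affine ℤ²-action with a = A+α step-2, and let m ∈ C₃ have step s(m) = 2 and be the lowest point on its Ā-orbit, so Ā^kB̄^l m = m + kÂm + lB̂m. If |Âm| ≤ |m|, then for all k ∈ ℤ and either for all l ∈ ℕ or for all l ∈ −ℕ one has |Ā^kB̄^l m| ≥ |m|/2. -/
open MeasureTheory

namespace ParabolicKAM

/-- Points of `ℝ^d` (lifts of points of the torus `𝕋^d`). -/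
abbrev Vec (d : ℕ) := Fin d → ℝ

/-- Integer vectors (Fourier frequencies). -/
abbrev IVec (d : ℕ) := Fin d → ℤ

/-- Square integer matrices. -/
abbrev Mat (d : ℕ) := Matrix (Fin d) (Fin d) ℤ

/-- The `d`-dimensional torus. -/
abbrev Td (d : ℕ) := Fin d → AddCircle (1 : ℝ)

instance : Fact ((0 : ℝ) < 1) := ⟨one_pos⟩

/-- The real matrix with the same entries as an integer matrix. -/
def rmat {d₁ d₂ : ℕ} (A : Matrix (Fin d₁) (Fin d₂) ℤ) : Matrix (Fin d₁) (Fin d₂) ℝ :=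
  A.map fun a => (a : ℝ)

/-- The affine map `x ↦ A x + α` on `ℝ^d` (a lift of the affine torus map). -/
def affR {d : ℕ} (A : Mat d) (α : Vec d) : Vec d → Vec d :=
  fun x => (rmat A).mulVec x + α

/-- `A` is parabolic (unipotent). -/
def IsParabolic {d : ℕ} (A : Mat d) : Prop := ∃ S : ℕ, (A - 1) ^ S = 0

/-- `A` is parabolic of step exactly `S`. -/
def IsStepParabolic {d : ℕ} (A : Mat d) (S : ℕ) : Prop :=
  (A - 1) ^ S = 0 ∧ (A - 1) ^ (S - 1) ≠ 0

/-- `A` is step-2 parabolic. -/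
def IsStep2 {d : ℕ} (A : Mat d) : Prop := (A - 1) ^ 2 = 0 ∧ A ≠ 1

/-- `(α, β)` is an admissible pair of translation parts: `(A - Id) β = (B - Id) α`. -/
def TAB {d : ℕ} (A B : Mat d) (α β : Vec d) : Prop :=
  (rmat (A - 1)).mulVec β = (rmat (B - 1)).mulVec α

/-- The dual matrix `Ā = (Aᵀ)⁻¹` (acting on frequencies). -/
noncomputable def dual {d : ℕ} (A : Mat d) : Mat d := A.transpose⁻¹

/-- `Â = Ā - Id`. -/
noncomputable def hat {d : ℕ} (A : Mat d) : Mat d := dual A - 1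

/-- Integer powers of a matrix. -/
noncomputable def zpowM {d : ℕ} (A : Mat d) : ℤ → Mat d
  | Int.ofNat n => A ^ n
  | Int.negSucc n => (A ^ (n + 1))⁻¹

/-- Euclidean norm of an integer vector. -/
noncomputable def inorm {d : ℕ} (m : IVec d) : ℝ :=
  Real.sqrt (∑ i, ((m i : ℝ)) ^ 2)

/-- Euclidean norm of a real vector. -/
noncomputable def rnorm {d : ℕ} (v : Vec d) : ℝ :=
  Real.sqrt (∑ i, (v i) ^ 2)

/-- Standard inner product of integer vectors. -/
def iprod {d : ℕ} (m n : IVec d) : ℤ := ∑ i, m i * n i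

/-- Euclidean operator norm of (the real matrix of) an integer matrix. -/
noncomputable def eopNorm {d : ℕ} (M : Mat d) : ℝ :=
  ‖LinearMap.toContinuousLinearMap (Matrix.toEuclideanLin (rmat M))‖

/-- `m` is a resonant vector for the dual action of `⟨A, B⟩`. -/
def Resonant {d : ℕ} (A B : Mat d) (m : IVec d) : Prop :=
  m ≠ 0 ∧
    (∃ k l : ℤ, ¬(k = 0 ∧ l = 0) ∧ (zpowM (dual A) k * zpowM (dual B) l).mulVec m = m) ∧
    ((dual A).mulVec m ≠ m ∨ (dual B).mulVec m ≠ m)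

/-- The normalization `k ∧ l = 1` for resonance pairs. -/
def NormalizedPair (k l : ℤ) : Prop :=
  (k = 1 ∧ l = 0) ∨ (k = 0 ∧ l = 1) ∨ (Int.gcd k l = 1 ∧ 0 < k)

/-- `(k, l)` is the resonance pair associated to the resonant vector `m`. -/
def IsResPair {d : ℕ} (A B : Mat d) (m : IVec d) (k l : ℤ) : Prop :=
  NormalizedPair k l ∧ k • (hat A).mulVec m + l • (hat B).mulVec m = 0

/-- `m ∈ 𝒞₁`: degenerate frequencies, fixed by the whole dual action. -/
def InC1 {d : ℕ} (A B : Mat d) (m : IVec d) : Prop :=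
  m ≠ 0 ∧ (dual A).mulVec m = m ∧ (dual B).mulVec m = m

/-- `m ∈ 𝒞₃`: nonzero, non-degenerate, non-resonant frequencies. -/
def InC3 {d : ℕ} (A B : Mat d) (m : IVec d) : Prop :=
  m ≠ 0 ∧ ¬InC1 A B m ∧ ¬Resonant A B m

/-- `s` is the step of the frequency `m`: the least `s` with `B̂^s m = 0`. -/
def stepOf {d : ℕ} (B : Mat d) (m : IVec d) (s : ℕ) : Prop :=
  ((hat B) ^ s).mulVec m = 0 ∧ ∀ t : ℕ, ((hat B) ^ t).mulVec m = 0 → s ≤ t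

/-- `m` is a lowest point on its `Ā`-orbit (for step-2 `A`, `Ā^k m = m + k Â m`). -/
def LowestOnOrbit {d : ℕ} (A : Mat d) (m : IVec d) : Prop :=
  ∀ k : ℤ, inorm m ≤ inorm (m + k • (hat A).mulVec m)

/-- The affine map of the torus with integer linear part `M` and translation `γ`. -/
noncomputable def affT {n : ℕ} (M : Mat n) (γ : Td n) : Td n → Td n :=
  fun x i => (∑ j, M i j • x j) + γ i

/-- The projection of tori induced by an integer matrix `P`. -/
noncomputable def projT {n d : ℕ} (P : Matrix (Fin n) (Fin d) ℤ) : Td d → Td n :=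
  fun x i => ∑ j, P i j • x j

/-- The point of the torus below `α ∈ ℝ^d`. -/
noncomputable def toT {d : ℕ} (α : Vec d) : Td d := fun i => (α i : AddCircle (1 : ℝ))

/-- A self-map of the torus is affine if it has the form `x ↦ M x + γ`, `M` integer. -/
def IsAffT {n : ℕ} (f : Td n → Td n) : Prop := ∃ (M : Mat n) (γ : Td n), f = affT M γ

/-- A rank-one factor of the affine `ℤ²`-action generated by `A + α` and `B + β`: a factor
action on a quotient torus, induced by a surjective integer-linear projection intertwining
the action, whose image is contained in the group generated by a single affine map. -/
structure RankOneFactorData (d : ℕ) (A B : Mat d) (α β : Vec d) : Type where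
  n : ℕ
  npos : 0 < n
  P : Matrix (Fin n) (Fin d) ℤ
  surj : Function.Surjective fun m : Fin d → ℤ => P.mulVec m
  A' : Mat n
  B' : Mat n
  α' : Td n
  β' : Td n
  intertwineA : projT P ∘ affT A (toT α) = affT A' α' ∘ projT P
  intertwineB : projT P ∘ affT B (toT β) = affT B' β' ∘ projT P
  rankOne : ∃ c : Equiv.Perm (Td n), IsAffT (⇑c) ∧
      (∃ u : Equiv.Perm (Td n), u ∈ Subgroup.zpowers c ∧ ⇑u = affT A' α') ∧
      (∃ v : Equiv.Perm (Td n), v ∈ Subgroup.zpowers c ∧ ⇑v = affT B' β')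

/-- The rank-one factor is the identity: both generators project to the identity. -/
def RankOneFactorData.IsIdentity {d : ℕ} {A B : Mat d} {α β : Vec d}
    (F : RankOneFactorData d A B α β) : Prop :=
  affT F.A' F.α' = id ∧ affT F.B' F.β' = id

/-- The rank-one factor is genuinely parabolic: some generator projects to an affine map
with non-identity unipotent linear part. -/
def RankOneFactorData.IsGenuinelyParabolic {d : ℕ} {A B : Mat d} {α β : Vec d}
    (F : RankOneFactorData d A B α β) : Prop :=
  (IsParabolic F.A' ∧ F.A' ≠ 1) ∨ (IsParabolic F.B' ∧ F.B' ≠ 1)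

/-- The linear action `⟨A, B⟩` is locked: every admissible affine action above it has a
rank-one factor that is the identity or genuinely parabolic. -/
def IsLocked {d : ℕ} (A B : Mat d) : Prop :=
  ∀ α β : Vec d, TAB A B α β →
    ∃ F : RankOneFactorData d A B α β, F.IsIdentity ∨ F.IsGenuinelyParabolic

/-- `f : ℝ^d → ℝ^d` is `ℤ^d`-periodic. -/
def ZPeriodic {d : ℕ} (f : Vec d → Vec d) : Prop :=
  ∀ (x : Vec d) (v : IVec d), f (x + fun i => (v i : ℝ)) = f x

/-- The `C^r` norm of a map `ℝ^d → ℝ^d`. -/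
noncomputable def crNorm {d : ℕ} (r : ℕ) (f : Vec d → Vec d) : ℝ :=
  ⨆ i : Fin (r + 1), ⨆ x : Vec d, ‖iteratedFDeriv ℝ (i : ℕ) f x‖

/-- `f` has zero average over the fundamental domain. -/
def ZeroAvg {d : ℕ} (f : Vec d → Vec d) : Prop :=
  ∫ x in Set.Icc (0 : Vec d) 1, f x = 0

/-- KAM-rigidity, under volume preserving perturbations, of the affine `ℤ²`-action
generated by `a = A + α` and `b = B + β` (expressed on `ℤ^d`-periodic lifts to `ℝ^d`). -/
def KAMRigid {d : ℕ} (A B : Mat d) (α β : Vec d) : Prop :=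
  ∃ σ r₀ : ℕ, σ ≤ r₀ ∧ ∃ ε : ℝ, 0 < ε ∧ ∃ C : ℝ, 0 < C ∧
    ∀ r : ℕ, r₀ ≤ r → ∀ f g : Vec d → Vec d,
      ContDiff ℝ (⊤ : ℕ∞) f → ContDiff ℝ (⊤ : ℕ∞) g → ZPeriodic f → ZPeriodic g →
      (fun x => affR A α x + f x) ∘ (fun x => affR B β x + g x) =
        (fun x => affR B β x + g x) ∘ (fun x => affR A α x + f x) →
      MeasurePreserving (fun x => affR A α x + f x) volume volume →
      MeasurePreserving (fun x => affR B β x + g x) volume volume →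
      crNorm r f ≤ ε → crNorm r g ≤ ε → ZeroAvg f → ZeroAvg g →
      ∃ h : Vec d → Vec d, ContDiff ℝ (⊤ : ℕ∞) h ∧ ZPeriodic h ∧
        crNorm (r - σ) h ≤ C * ε ∧
        Function.Bijective (fun x : Vec d => x + h x) ∧
        MeasurePreserving (fun x : Vec d => x + h x) volume volume ∧
        (fun x : Vec d => x + h x) ∘ (fun x => affR A α x + f x) =
          affR A α ∘ (fun x : Vec d => x + h x) ∧
        (fun x : Vec d => x + h x) ∘ (fun x => affR B β x + g x) =
          affR B β ∘ (fun x : Vec d => x + h x)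

/-- Ergodicity of the affine `ℤ²`-action with respect to Haar measure on the torus. -/
def JointlyErgodic {d : ℕ} (A B : Mat d) (α β : Vec d) : Prop :=
  ∀ s : Set (Td d), MeasurableSet s →
    affT A (toT α) ⁻¹' s = s → affT B (toT β) ⁻¹' s = s →
    volume s = 0 ∨ volume sᶜ = 0

/-- The linear map whose kernel is the space `𝒯(A,B)` of admissible translation parts. -/
noncomputable def TABmap {d : ℕ} (A B : Mat d) : (Vec d × Vec d) →ₗ[ℝ] Vec d :=
  ((rmat (A - 1)).mulVecLin.comp (LinearMap.snd ℝ (Vec d) (Vec d))) -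
    ((rmat (B - 1)).mulVecLin.comp (LinearMap.fst ℝ (Vec d) (Vec d)))

/-- The space `𝒯(A,B)` of admissible translation parts, as a subspace of `ℝ^d × ℝ^d`. -/
noncomputable def TABsub {d : ℕ} (A B : Mat d) : Submodule ℝ (Vec d × Vec d) :=
  LinearMap.ker (TABmap A B)

/-- `e(m, x) = e^{2π i ⟨m, x⟩}`. -/
noncomputable def eF {d : ℕ} (m : IVec d) (x : Vec d) : ℂ :=
  Complex.exp (2 * (Real.pi : ℂ) * Complex.I * ∑ i, (m i : ℂ) * (x i : ℂ))

/-- `c : ℤ → ℤ → ℝ^d` is the family of translation parts `α_{k,l} = a^k b^l - A^k B^l`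
of the elements of the affine action generated by `a = A + α` and `b = B + β`. -/
def IsTransFamily {d : ℕ} (A B : Mat d) (α β : Vec d) (c : ℤ → ℤ → Vec d) : Prop :=
  c 0 0 = 0 ∧ (∀ k l : ℤ, c (k + 1) l = α + (rmat A).mulVec (c k l)) ∧
    ∀ k l : ℤ, c k (l + 1) = β + (rmat B).mulVec (c k l)

/-- The maximal translation factor of the action is `(γ,τ)`-simultaneously Diophantine. -/
def DiophTransFactor {d : ℕ} (γ τ : ℝ) (A B : Mat d) (α β : Vec d) : Prop :=
  ∀ m : IVec d, m ≠ 0 → (dual A).mulVec m = m → (dual B).mulVec m = m →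
    γ / inorm m ^ τ < max ‖1 - eF m α‖ ‖1 - eF m β‖

/-- Every resonance of the action is `(γ,τ)`-Diophantine. -/
def DiophResonances {d : ℕ} (γ τ : ℝ) (A B : Mat d) (α β : Vec d) : Prop :=
  ∀ (m : IVec d) (k l : ℤ), Resonant A B m → IsResPair A B m k l →
    ∀ c : ℤ → ℤ → Vec d, IsTransFamily A B α β c →
      γ / inorm m ^ τ < ‖1 - eF m (c k l)‖

/-- The affine action generated by `A + α`, `B + β` is `(γ,τ)`-Diophantine. -/
def DiophAction {d : ℕ} (γ τ : ℝ) (A B : Mat d) (α β : Vec d) : Prop :=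
  DiophTransFactor γ τ A B α β ∧ DiophResonances γ τ A B α β

/-- The linearized coboundary operator `D h = h ∘ a - A h` above `a = A + α`. -/
def Dop {d : ℕ} (A : Mat d) (α : Vec d) (h : Vec d → Vec d) : Vec d → Vec d :=
  fun x => h (affR A α x) - (rmat A).mulVec (h x)

/-- Generalized binomial coefficient `C(l, j) = l (l-1) ⋯ (l-j+1) / j!`
(a polynomial in `l` of degree `j`; the division is exact). -/
def zchoose (l : ℤ) (j : ℕ) : ℤ :=
  (∏ i ∈ Finset.range j, (l - (i : ℤ))) / (j.factorial : ℤ)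



/-! ### Auxiliary lemmas -/

section AuxLemmas
variable {d : ℕ}

/-- two-sided inverse from nilpotency of `x - 1`. -/
lemma geom_inv {R : Type*} [Ring R] (x : R) (S : ℕ) (h : (x - 1) ^ S = 0) :
    ∃ C : R, x * C = 1 ∧ C * x = 1 := by
  refine ⟨∑ i ∈ Finset.range S, (1 - x) ^ i, ?_, ?_⟩
  · have hc : Commute x (∑ i ∈ Finset.range S, (1 - x) ^ i) := by
      refine Commute.sum_right _ _ _ fun i _ => Commute.pow_right ?_ i
      exact (Commute.one_right x).sub_right (Commute.refl x)
    rw [hc.eq]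
    have hgs := geom_sum_mul (1 - x) S
    have h2 : (1 - x) ^ S = 0 := by
      have h3 : (1 - x) = -(x - 1) := by noncomm_ring
      rw [h3, neg_pow, h, mul_zero]
    rw [h2] at hgs
    have hneg : (∑ i ∈ Finset.range S, (1 - x) ^ i) * (-x) = -1 := by
      calc (∑ i ∈ Finset.range S, (1 - x) ^ i) * (-x)
          = (∑ i ∈ Finset.range S, (1 - x) ^ i) * ((1 - x) - 1) := by noncomm_ring
        _ = -1 := by rw [hgs]; noncomm_ring
    calc (∑ i ∈ Finset.range S, (1 - x) ^ i) * x
        = -((∑ i ∈ Finset.range S, (1 - x) ^ i) * (-x)) := by noncomm_ring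
      _ = 1 := by rw [hneg]; abel
  · have hgs := geom_sum_mul (1 - x) S
    have h2 : (1 - x) ^ S = 0 := by
      have h3 : (1 - x) = -(x - 1) := by noncomm_ring
      rw [h3, neg_pow, h, mul_zero]
    rw [h2] at hgs
    calc (∑ i ∈ Finset.range S, (1 - x) ^ i) * x
        = -((∑ i ∈ Finset.range S, (1 - x) ^ i) * ((1 - x) - 1)) := by noncomm_ring
      _ = 1 := by rw [hgs]; noncomm_ring

lemma transpose_nilpotent {A : Mat d} {S : ℕ} (h : (A - 1) ^ S = 0) :
    (A.transpose - 1) ^ S = 0 := by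
  have h1 := congrArg Matrix.transpose h
  rwa [Matrix.transpose_pow, Matrix.transpose_sub, Matrix.transpose_one,
    Matrix.transpose_zero] at h1

lemma dual_inv {B : Mat d} {S : ℕ} (h : (B - 1) ^ S = 0) :
    B.transpose * dual B = 1 ∧ dual B * B.transpose = 1 := by
  obtain ⟨C, h1, h2⟩ := geom_inv B.transpose S (transpose_nilpotent h)
  have h3 : dual B = C := Matrix.inv_eq_right_inv h1
  rw [h3]; exact ⟨h1, h2⟩

lemma dualA_eq {A : Mat d} (h : (A - 1) ^ 2 = 0) : dual A = 2 - A.transpose := by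
  have h2 : (A.transpose - 1) ^ 2 = 0 := transpose_nilpotent h
  refine Matrix.inv_eq_right_inv ?_
  calc A.transpose * (2 - A.transpose) = -((A.transpose - 1) ^ 2) + 1 := by noncomm_ring
    _ = 1 := by rw [h2]; abel

lemma hatA_eq {A : Mat d} (h : (A - 1) ^ 2 = 0) : hat A = 1 - A.transpose := by
  unfold hat; rw [dualA_eq h, sub_right_comm]; norm_num

lemma hatA_sq {A : Mat d} (h : (A - 1) ^ 2 = 0) : hat A * hat A = 0 := by
  rw [hatA_eq h]
  calc (1 - A.transpose) * (1 - A.transpose) = (A.transpose - 1) ^ 2 := by noncomm_ring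
    _ = 0 := transpose_nilpotent h

lemma dual_eq_hat_add_one (B : Mat d) : dual B = hat B + 1 := by unfold hat; abel

lemma commute_dual {A B : Mat d} (hA2 : (A - 1) ^ 2 = 0) (hBd : B.transpose * dual B = 1)
    (hdB : dual B * B.transpose = 1) (hAB : A * B = B * A) :
    dual A * dual B = dual B * dual A := by
  have hTcomm : A.transpose * B.transpose = B.transpose * A.transpose := by
    calc A.transpose * B.transpose = (B * A).transpose := (Matrix.transpose_mul B A).symm
      _ = (A * B).transpose := by rw [hAB]
      _ = B.transpose * A.transpose := Matrix.transpose_mul A B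
  have hAdB : A.transpose * dual B = dual B * A.transpose := by
    calc A.transpose * dual B = (dual B * B.transpose) * (A.transpose * dual B) := by
          rw [hdB, one_mul]
      _ = dual B * ((B.transpose * A.transpose) * dual B) := by
          simp only [mul_assoc]
      _ = dual B * ((A.transpose * B.transpose) * dual B) := by rw [hTcomm]
      _ = dual B * A.transpose * (B.transpose * dual B) := by simp only [mul_assoc]
      _ = dual B * A.transpose := by rw [hBd, mul_one]
  rw [dualA_eq hA2, sub_mul, mul_sub, hAdB, two_mul, mul_two]

lemma commute_hat {A B : Mat d} (hdd : dual A * dual B = dual B * dual A) :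
    hat A * hat B = hat B * hat A := by
  unfold hat
  calc (dual A - 1) * (dual B - 1) = dual A * dual B - dual A - dual B + 1 := by noncomm_ring
    _ = dual B * dual A - dual A - dual B + 1 := by rw [hdd]
    _ = (dual B - 1) * (dual A - 1) := by noncomm_ring

lemma pow_mul_pow_eq_one {R : Type*} [Monoid R] {a b : R} (h1 : a * b = 1) (h2 : b * a = 1)
    (n : ℕ) : a ^ n * b ^ n = 1 := by
  induction n with
  | zero => simp
  | succ n ih =>
      rw [pow_succ a, pow_succ' b]
      calc a ^ n * a * (b * b ^ n) = a ^ n * (a * b) * b ^ n := by simp only [mul_assoc]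
        _ = a ^ n * b ^ n := by rw [h1, mul_one]
        _ = 1 := ih

lemma zpowA_eq {A : Mat d} (hA2 : (A - 1) ^ 2 = 0) (k : ℤ) :
    zpowM (dual A) k = 1 + k • hat A := by
  have hsq : hat A * hat A = 0 := hatA_sq hA2
  have hpow : ∀ n : ℕ, (dual A) ^ n = 1 + (n : ℤ) • hat A := by
    intro n
    induction n with
    | zero => simp
    | succ n ih =>
        rw [pow_succ, ih, dual_eq_hat_add_one]
        rw [mul_add, mul_one, add_mul, one_mul, smul_mul_assoc, hsq, smul_zero, add_zero]
        push_cast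
        rw [add_smul, one_smul]
        abel
  match k with
  | Int.ofNat n =>
      show (dual A) ^ n = _
      rw [hpow n]; norm_num
  | Int.negSucc n =>
      show ((dual A) ^ (n + 1))⁻¹ = _
      have hrinv : (dual A) ^ (n + 1) * (1 - ((n : ℤ) + 1) • hat A) = 1 := by
        rw [hpow (n + 1)]
        push_cast
        rw [mul_sub, mul_one, mul_smul_comm, add_mul, one_mul, smul_mul_assoc, hsq,
          smul_zero, add_zero]
        abel
      rw [Matrix.inv_eq_right_inv hrinv, Int.negSucc_eq, neg_smul, ← sub_eq_add_neg]

/-- action of integer powers of `dual B` on `m` when `(hat B) q = 0`, `q = hat B m`. -/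
lemma zpowB_action {B : Mat d} (hBd : B.transpose * dual B = 1) (hdB : dual B * B.transpose = 1)
    (m q : IVec d) (hq : (hat B).mulVec m = q) (hq0 : (hat B).mulVec q = 0) (l : ℤ) :
    (zpowM (dual B) l).mulVec m = m + l • q := by
  have hdm : (dual B).mulVec m = m + q := by
    rw [dual_eq_hat_add_one, Matrix.add_mulVec, Matrix.one_mulVec, hq, add_comm]
  have hdq : (dual B).mulVec q = q := by
    rw [dual_eq_hat_add_one, Matrix.add_mulVec, Matrix.one_mulVec, hq0, zero_add]
  have hpow : ∀ n : ℕ, ((dual B) ^ n).mulVec m = m + (n : ℤ) • q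
      ∧ ((dual B) ^ n).mulVec q = q := by
    intro n
    induction n with
    | zero => simp
    | succ n ih =>
        constructor
        · rw [pow_succ', ← Matrix.mulVec_mulVec, ih.1, Matrix.mulVec_add, Matrix.mulVec_smul,
            hdm, hdq]
          push_cast
          rw [add_smul, one_smul]
          abel
        · rw [pow_succ', ← Matrix.mulVec_mulVec, ih.2, hdq]
  match l with
  | Int.ofNat n =>
      show ((dual B) ^ n).mulVec m = _
      rw [(hpow n).1]; norm_num
  | Int.negSucc n =>
      show (((dual B) ^ (n + 1))⁻¹).mulVec m = _
      have hXY : (dual B) ^ (n + 1) * (B.transpose) ^ (n + 1) = 1 :=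
        pow_mul_pow_eq_one hdB hBd (n + 1)
      have hYX : (B.transpose) ^ (n + 1) * (dual B) ^ (n + 1) = 1 :=
        pow_mul_pow_eq_one hBd hdB (n + 1)
      have hinv : ((dual B) ^ (n + 1))⁻¹ = (B.transpose) ^ (n + 1) :=
        Matrix.inv_eq_right_inv hXY
      have hXm : ((dual B) ^ (n + 1)).mulVec (m - ((n : ℤ) + 1) • q) = m := by
        rw [Matrix.mulVec_sub, Matrix.mulVec_smul, (hpow (n + 1)).1, (hpow (n + 1)).2]
        push_cast
        abel
      calc (((dual B) ^ (n + 1))⁻¹).mulVec m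
          = (((dual B) ^ (n + 1))⁻¹).mulVec (((dual B) ^ (n + 1)).mulVec
              (m - ((n : ℤ) + 1) • q)) := by rw [hXm]
        _ = ((((dual B) ^ (n + 1))⁻¹) * ((dual B) ^ (n + 1))).mulVec
              (m - ((n : ℤ) + 1) • q) := Matrix.mulVec_mulVec _ _ _
        _ = m - ((n : ℤ) + 1) • q := by rw [hinv, hYX, Matrix.one_mulVec]
        _ = m + (Int.negSucc n) • q := by
            rw [Int.negSucc_eq, neg_smul, ← sub_eq_add_neg]

/-- Bezout over a finset. -/
lemma exists_sum_eq_gcd {ι : Type*} [DecidableEq ι] (f : ι → ℤ) (s : Finset ι) :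
    ∃ x : ι → ℤ, ∑ i ∈ s, f i * x i = s.gcd f := by
  induction s using Finset.induction_on with
  | empty => exact ⟨0, by simp⟩
  | @insert a s ha ih =>
      obtain ⟨x, hx⟩ := ih
      set gA := Int.gcdA (f a) (s.gcd f) with hgA
      set gB := Int.gcdB (f a) (s.gcd f) with hgB
      refine ⟨fun i => if i = a then gA else gB * x i, ?_⟩
      rw [Finset.sum_insert ha, Finset.gcd_insert]
      dsimp only
      rw [if_pos rfl]
      have h2 : ∀ i ∈ s, f i * (if i = a then gA else gB * x i) = gB * (f i * x i) := by
        intro i hi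
        rw [if_neg (by rintro rfl; exact ha hi)]
        ring
      rw [Finset.sum_congr rfl h2, ← Finset.mul_sum, hx, ← Int.coe_gcd, Int.gcd_eq_gcd_ab]
      ring

lemma mul_nonneg_of_np_np {a b : ℝ} (ha : a ≤ 0) (hb : b ≤ 0) : 0 ≤ a * b := by
  have h := mul_nonneg (neg_nonneg.mpr ha) (neg_nonneg.mpr hb)
  rwa [neg_mul_neg] at h

/-- purely real quadratic-form bound. -/
lemma quad_bound (Sm Sp Sq dmp dmq dpq : ℝ) (hSm : 0 ≤ Sm) (hSp : 0 ≤ Sp) (hSq : 0 ≤ Sq)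
    (cs1 : dmp ^ 2 ≤ Sm * Sp) (cs2 : dpq ^ 2 ≤ Sp * Sq)
    (hlowp : 2 * dmp ≤ Sp) (hlown : -Sp ≤ 2 * dmp) (hpm : Sp ≤ Sm) :
    (∀ k l : ℝ, 0 ≤ l → Sm / 4 ≤ Sm + k ^ 2 * Sp + l ^ 2 * Sq
        + 2 * k * dmp + 2 * l * dmq + 2 * (k * l) * dpq) ∨
    (∀ k l : ℝ, l ≤ 0 → Sm / 4 ≤ Sm + k ^ 2 * Sp + l ^ 2 * Sq
        + 2 * k * dmp + 2 * l * dmq + 2 * (k * l) * dpq) := by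
  rcases eq_or_lt_of_le hSp with hp0 | hp0
  · have hdmp : dmp = 0 := by nlinarith [sq_nonneg dmp]
    have hdpq : dpq = 0 := by nlinarith [sq_nonneg dpq]
    have hkp : ∀ k : ℝ, k ^ 2 * Sp = 0 := by intro k; rw [← hp0]; ring
    rcases le_or_gt 0 dmq with h | h
    · left; intro k l hl
      have h1 : 0 ≤ l * dmq := mul_nonneg hl h
      have h2 : 0 ≤ l ^ 2 * Sq := mul_nonneg (sq_nonneg l) hSq
      have h3 := hkp k
      rw [hdmp, hdpq]
      linarith
    · right; intro k l hl
      have h1 : 0 ≤ l * dmq := mul_nonneg_of_np_np hl h.le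
      have h2 : 0 ≤ l ^ 2 * Sq := mul_nonneg (sq_nonneg l) hSq
      have h3 := hkp k
      rw [hdmp, hdpq]
      linarith
  · have h4 : 4 * dmp ^ 2 ≤ Sp ^ 2 := by
      nlinarith [mul_nonneg (by linarith : (0:ℝ) ≤ Sp - 2 * dmp)
        (by linarith : (0:ℝ) ≤ Sp + 2 * dmp)]
    have h5 : Sp ^ 2 ≤ Sp * Sm := by nlinarith
    have hkey : ∀ k l : ℝ, 0 ≤ l * (dmq * Sp - dmp * dpq) →
        Sm / 4 ≤ Sm + k ^ 2 * Sp + l ^ 2 * Sq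
          + 2 * k * dmp + 2 * l * dmq + 2 * (k * l) * dpq := by
      intro k l hl
      have hid : Sp * (Sm + k ^ 2 * Sp + l ^ 2 * Sq + 2 * k * dmp + 2 * l * dmq
          + 2 * (k * l) * dpq) =
          (k * Sp + dmp + l * dpq) ^ 2 + (Sm * Sp - dmp ^ 2)
            + 2 * (l * (dmq * Sp - dmp * dpq)) + l ^ 2 * (Sp * Sq - dpq ^ 2) := by ring
      have h6 : 0 ≤ (k * Sp + dmp + l * dpq) ^ 2 := sq_nonneg _
      have h7 : 0 ≤ l ^ 2 * (Sp * Sq - dpq ^ 2) := mul_nonneg (sq_nonneg l) (by linarith)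
      have h8 : 0 ≤ Sm * Sp := mul_nonneg hSm hSp
      have hmul : Sp * (Sm / 4) ≤ Sp * (Sm + k ^ 2 * Sp + l ^ 2 * Sq
          + 2 * k * dmp + 2 * l * dmq + 2 * (k * l) * dpq) := by
        rw [hid]; nlinarith
      exact le_of_mul_le_mul_left hmul hp0
    rcases le_or_gt 0 (dmq * Sp - dmp * dpq) with h | h
    · left; intro k l hl; exact hkey k l (mul_nonneg hl h)
    · right; intro k l hl; exact hkey k l (mul_nonneg_of_np_np hl h.le)

lemma sqrt_half_le {Sm T : ℝ} (hSm : 0 ≤ Sm) (h : Sm / 4 ≤ T) :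
    Real.sqrt Sm / 2 ≤ Real.sqrt T := by
  have h1 : Real.sqrt (Sm / 4) = Real.sqrt Sm / 2 := by
    rw [show Sm / 4 = Sm * (1 / 2) ^ 2 by ring, Real.sqrt_mul hSm,
      Real.sqrt_sq (by norm_num : (0:ℝ) ≤ 1 / 2)]
    ring
  rw [← h1]
  exact Real.sqrt_le_sqrt h

lemma affT_one_zero (n : ℕ) : affT (1 : Mat n) (0 : Td n) = id := by
  funext x i
  simp [affT, Matrix.one_apply, ite_smul, Finset.sum_ite_eq]

lemma sum_coe_addCircle {ι : Type*} (s : Finset ι) (c : ι → ℝ) :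
    (((∑ i ∈ s, c i : ℝ)) : AddCircle (1:ℝ)) = ∑ i ∈ s, ((c i : ℝ) : AddCircle (1:ℝ)) := by
  have h := map_sum (QuotientAddGroup.mk' (AddSubgroup.zmultiples (1:ℝ))) c s
  simpa using h

lemma pair_mulVec (M : Mat d) (w : IVec d) (v : Vec d) :
    ∑ i, (w i : ℝ) * ((rmat M).mulVec v) i
      = ∑ i, ((M.transpose.mulVec w) i : ℝ) * v i := by
  simp only [Matrix.mulVec, dotProduct, rmat, Matrix.map_apply, Matrix.transpose_apply]
  push_cast
  simp only [Finset.mul_sum, Finset.sum_mul]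
  rw [Finset.sum_comm]
  exact Finset.sum_congr rfl fun j _ => Finset.sum_congr rfl fun i _ => by ring

lemma intertwine_aux (M : Mat d) (γ : Vec d) (u₀ : IVec d)
    (hM : M.transpose.mulVec u₀ = u₀) (hγ : ∑ i, (u₀ i : ℝ) * γ i = 0) :
    projT (Matrix.of fun (_ : Fin 1) j => u₀ j) ∘ affT M (toT γ)
      = affT (1 : Mat 1) (0 : Td 1) ∘ projT (Matrix.of fun (_ : Fin 1) j => u₀ j) := by
  funext x i
  rw [Function.comp_apply, Function.comp_apply, affT_one_zero]
  simp only [projT, affT, toT, Matrix.of_apply, id_eq]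
  have step1 : ∀ j, u₀ j • ((∑ t, M j t • x t) + (((γ j : ℝ)) : AddCircle (1:ℝ)))
      = (∑ t, (u₀ j * M j t) • x t) + ((((u₀ j : ℝ) * γ j : ℝ)) : AddCircle (1:ℝ)) := by
    intro j
    rw [smul_add, Finset.smul_sum]
    congr 1
    · exact Finset.sum_congr rfl fun t _ => smul_smul (u₀ j) (M j t) (x t)
    · rw [← QuotientAddGroup.mk_zsmul, zsmul_eq_mul]
  rw [Finset.sum_congr rfl fun j _ => step1 j, Finset.sum_add_distrib]
  have step2 : (∑ j, ∑ t, (u₀ j * M j t) • x t) = ∑ t, u₀ t • x t := by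
    rw [Finset.sum_comm]
    refine Finset.sum_congr rfl fun t _ => ?_
    rw [← Finset.sum_smul]
    congr 1
    have h1 : (∑ j, u₀ j * M j t) = (M.transpose.mulVec u₀) t := by
      simp [Matrix.mulVec, dotProduct, Matrix.transpose_apply, mul_comm]
    rw [h1, hM]
  have step3 : (∑ j, ((((u₀ j : ℝ) * γ j : ℝ)) : AddCircle (1:ℝ))) = 0 := by
    rw [← sum_coe_addCircle, hγ]
    simp
  rw [step2, step3, add_zero]

lemma isLocked_of_fixed {A B : Mat d} (u : IVec d) (hu : u ≠ 0)
    (hAu : A.transpose.mulVec u = u) (hBu : B.transpose.mulVec u = u)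
    (hpair : ∀ α β : Vec d, TAB A B α β →
      (∑ i, (u i : ℝ) * α i) = 0 ∧ (∑ i, (u i : ℝ) * β i) = 0) :
    IsLocked A B := by
  classical
  set g : ℤ := Finset.univ.gcd u with hg
  have hgne : g ≠ 0 := by
    intro h0
    apply hu
    funext i
    exact Finset.gcd_eq_zero_iff.mp h0 i (Finset.mem_univ i)
  set u₀ : IVec d := fun i => u i / g with hu₀
  have hgi : ∀ i, u i = g * u₀ i := fun i =>
    (Int.mul_ediv_cancel' (Finset.gcd_dvd (Finset.mem_univ i))).symm
  have husmul : u = g • u₀ := funext fun i => by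
    rw [Pi.smul_apply, smul_eq_mul]; exact hgi i
  have hgcd : g = |g| * Finset.univ.gcd u₀ := by
    calc g = Finset.univ.gcd u := hg
      _ = Finset.univ.gcd (fun i => g * u₀ i) := by
          rw [show u = (fun i => g * u₀ i) from funext hgi]
      _ = normalize g * Finset.univ.gcd u₀ := Finset.gcd_mul_left
      _ = |g| * Finset.univ.gcd u₀ := by rw [Int.abs_eq_normalize]
  have habs : |Finset.univ.gcd u₀| = 1 := by
    have h1 : |g| * 1 = |g| * |Finset.univ.gcd u₀| := by
      rw [mul_one]
      conv_lhs => rw [hgcd]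
      rw [abs_mul, abs_abs]
    exact (mul_left_cancel₀ (abs_ne_zero.mpr hgne) h1).symm
  obtain ⟨x0, hx0⟩ := exists_sum_eq_gcd u₀ Finset.univ
  have ht : Finset.univ.gcd u₀ = 1 ∨ Finset.univ.gcd u₀ = -1 :=
    (abs_eq (by norm_num : (0:ℤ) ≤ 1)).mp habs
  set x : IVec d := fun i => Finset.univ.gcd u₀ * x0 i with hx'
  have hx : ∑ i, u₀ i * x i = 1 := by
    have h2 : ∑ i, u₀ i * (Finset.univ.gcd u₀ * x0 i)
        = Finset.univ.gcd u₀ * ∑ i, u₀ i * x0 i := by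
      rw [Finset.mul_sum]
      exact Finset.sum_congr rfl fun i _ => by ring
    rw [hx', h2, hx0]
    rcases ht with h | h <;> rw [h] <;> norm_num
  have hAu₀ : A.transpose.mulVec u₀ = u₀ := by
    have h2 : A.transpose.mulVec (g • u₀) = g • u₀ := by rw [← husmul]; exact hAu
    rw [Matrix.mulVec_smul] at h2
    exact smul_right_injective (IVec d) hgne h2
  have hBu₀ : B.transpose.mulVec u₀ = u₀ := by
    have h2 : B.transpose.mulVec (g • u₀) = g • u₀ := by rw [← husmul]; exact hBu
    rw [Matrix.mulVec_smul] at h2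
    exact smul_right_injective (IVec d) hgne h2
  intro α β hT
  obtain ⟨hα, hβ⟩ := hpair α β hT
  have hscale : ∀ v : Vec d, (∑ i, (u i : ℝ) * v i) = 0 → (∑ i, (u₀ i : ℝ) * v i) = 0 := by
    intro v hv
    have h3 : (g : ℝ) * ∑ i, (u₀ i : ℝ) * v i = 0 := by
      rw [Finset.mul_sum, ← hv]
      refine Finset.sum_congr rfl fun i _ => ?_
      rw [hgi i]
      push_cast
      ring
    rcases mul_eq_zero.mp h3 with h | h
    · exact absurd h (by exact_mod_cast hgne)
    · exact h
  refine ⟨⟨1, one_pos, Matrix.of fun _ j => u₀ j, ?_, 1, 1, 0, 0,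
      intertwine_aux A α u₀ hAu₀ (hscale α hα), intertwine_aux B β u₀ hBu₀ (hscale β hβ),
      ?_⟩, Or.inl ⟨affT_one_zero 1, affT_one_zero 1⟩⟩
  · intro y
    refine ⟨(y 0) • x, ?_⟩
    funext i
    have hi : i = 0 := Subsingleton.elim i 0
    subst hi
    show ∑ j, (Matrix.of fun _ j => u₀ j) 0 j * ((y 0) • x) j = y 0
    simp only [Matrix.of_apply, Pi.smul_apply, smul_eq_mul]
    calc ∑ j, u₀ j * (y 0 * x j) = y 0 * ∑ j, u₀ j * x j := by
          rw [Finset.mul_sum]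
          exact Finset.sum_congr rfl fun j _ => by ring
      _ = y 0 := by rw [hx, mul_one]
  · refine ⟨Equiv.refl _, ⟨1, 0, ?_⟩, ⟨Equiv.refl _, Subgroup.mem_zpowers _, ?_⟩,
      ⟨Equiv.refl _, Subgroup.mem_zpowers _, ?_⟩⟩ <;>
    · rw [affT_one_zero]; rfl

end AuxLemmas

/-- **Lemma (growth when `|Âm| ≤ |m|`, step `s(m) = 2`).** Let `⟨a,b⟩` be an unlocked
parabolic affine action with `a` step-2, and let `m ∈ 𝒞₃` have step `s(m) = 2` and be
the lowest point on its `Ā`-orbit. If `|Âm| ≤ |m|`, then for all `k ∈ ℤ` and either for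
all `l ≥ 0` or for all `l ≤ 0`, one has `|Ā^k B̄^l m| ≥ |m|/2`. -/
theorem growth_small_hatA (d : ℕ) (A B : Mat d) (α β : Vec d)
    (hA2 : IsStep2 A) (hBpar : IsParabolic B)
    (hcomm : A * B = B * A) (hTAB : TAB A B α β)
    (hunlocked : ¬ IsLocked A B)
    (m : IVec d) (hm : InC3 A B m) (hstep : stepOf B m 2)
    (hlow : LowestOnOrbit A m)
    (hsmall : inorm ((hat A).mulVec m) ≤ inorm m) :
    (∀ k l : ℤ, 0 ≤ l →
        inorm m / 2 ≤ inorm ((zpowM (dual A) k * zpowM (dual B) l).mulVec m)) ∨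
    (∀ k l : ℤ, l ≤ 0 →
        inorm m / 2 ≤ inorm ((zpowM (dual A) k * zpowM (dual B) l).mulVec m)) := by
  classical
  obtain ⟨hA2, hAne⟩ := hA2
  obtain ⟨SB, hSB⟩ := hBpar
  obtain ⟨hBd, hdB⟩ := dual_inv hSB
  set p : IVec d := (hat A).mulVec m with hp
  set q : IVec d := (hat B).mulVec m with hq
  have hAsq : hat A * hat A = 0 := hatA_sq hA2
  have hq0 : (hat B).mulVec q = 0 := by
    rw [hq, Matrix.mulVec_mulVec, ← pow_two]
    exact hstep.1
  by_cases hu : (hat A).mulVec q = 0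
  · -- `Â B̂ m = 0`: direct growth estimate
    have hvec : ∀ k l : ℤ,
        (zpowM (dual A) k * zpowM (dual B) l).mulVec m = m + k • p + l • q := by
      intro k l
      rw [← Matrix.mulVec_mulVec, zpowB_action hBd hdB m q hq.symm hq0 l, zpowA_eq hA2 k,
        Matrix.add_mulVec, Matrix.one_mulVec, Matrix.smul_mulVec,
        Matrix.mulVec_add, Matrix.mulVec_smul, hu, smul_zero, add_zero, ← hp]
      abel
    set Sm : ℝ := ∑ i, ((m i : ℝ)) ^ 2 with hSm
    set Sp : ℝ := ∑ i, ((p i : ℝ)) ^ 2 with hSp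
    set Sq : ℝ := ∑ i, ((q i : ℝ)) ^ 2 with hSq
    set dmp : ℝ := ∑ i, (m i : ℝ) * (p i : ℝ) with hdmp
    set dmq : ℝ := ∑ i, (m i : ℝ) * (q i : ℝ) with hdmq
    set dpq : ℝ := ∑ i, (p i : ℝ) * (q i : ℝ) with hdpq
    have hSmnn : 0 ≤ Sm := Finset.sum_nonneg fun i _ => sq_nonneg _
    have hSpnn : 0 ≤ Sp := Finset.sum_nonneg fun i _ => sq_nonneg _
    have hSqnn : 0 ≤ Sq := Finset.sum_nonneg fun i _ => sq_nonneg _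
    have hcs1 : dmp ^ 2 ≤ Sm * Sp :=
      Finset.sum_mul_sq_le_sq_mul_sq Finset.univ (fun i => (m i : ℝ)) (fun i => (p i : ℝ))
    have hcs2 : dpq ^ 2 ≤ Sp * Sq :=
      Finset.sum_mul_sq_le_sq_mul_sq Finset.univ (fun i => (p i : ℝ)) (fun i => (q i : ℝ))
    have hsq_eq : ∀ x : IVec d, (inorm x) ^ 2 = ∑ i, ((x i : ℝ)) ^ 2 := fun x =>
      Real.sq_sqrt (Finset.sum_nonneg fun i _ => sq_nonneg _)
    have hpm : Sp ≤ Sm := by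
      have h2 : Real.sqrt Sp ≤ Real.sqrt Sm := hsmall
      have h3 := pow_le_pow_left₀ (Real.sqrt_nonneg Sp) h2 2
      rwa [Real.sq_sqrt hSpnn, Real.sq_sqrt hSmnn] at h3
    have expand2 : ∀ k : ℤ, (∑ i, (((m + k • p) i : ℝ)) ^ 2)
        = Sm + (k : ℝ) ^ 2 * Sp + 2 * (k : ℝ) * dmp := by
      intro k
      have h1 : ∀ i : Fin d, (((m + k • p) i : ℝ)) ^ 2
          = (m i : ℝ) ^ 2 + (k : ℝ) ^ 2 * ((p i : ℝ)) ^ 2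
            + 2 * (k : ℝ) * ((m i : ℝ) * (p i : ℝ)) := by
        intro i
        simp only [Pi.add_apply, Pi.smul_apply, smul_eq_mul]
        push_cast
        ring
      rw [Finset.sum_congr rfl fun i _ => h1 i]
      simp only [Finset.sum_add_distrib, ← Finset.mul_sum]
      rfl
    have hlow2 : ∀ k : ℤ, Sm ≤ Sm + (k : ℝ) ^ 2 * Sp + 2 * (k : ℝ) * dmp := by
      intro k
      have h2 : Real.sqrt Sm ≤ Real.sqrt (∑ i, (((m + k • p) i : ℝ)) ^ 2) := hlow k
      have h3 := pow_le_pow_left₀ (Real.sqrt_nonneg Sm) h2 2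
      rwa [Real.sq_sqrt hSmnn,
        Real.sq_sqrt (Finset.sum_nonneg fun i _ => sq_nonneg _), expand2 k] at h3
    have hlowp : 2 * dmp ≤ Sp := by have h1 := hlow2 (-1); push_cast at h1; linarith
    have hlown : -Sp ≤ 2 * dmp := by have h1 := hlow2 1; push_cast at h1; linarith
    have expand : ∀ k l : ℤ, (∑ i, (((m + k • p + l • q) i : ℝ)) ^ 2)
        = Sm + (k : ℝ) ^ 2 * Sp + (l : ℝ) ^ 2 * Sq + 2 * (k : ℝ) * dmp
          + 2 * (l : ℝ) * dmq + 2 * ((k : ℝ) * (l : ℝ)) * dpq := by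
      intro k l
      have h1 : ∀ i : Fin d, (((m + k • p + l • q) i : ℝ)) ^ 2
          = (m i : ℝ) ^ 2 + (k : ℝ) ^ 2 * ((p i : ℝ)) ^ 2 + (l : ℝ) ^ 2 * ((q i : ℝ)) ^ 2
            + 2 * (k : ℝ) * ((m i : ℝ) * (p i : ℝ)) + 2 * (l : ℝ) * ((m i : ℝ) * (q i : ℝ))
            + 2 * ((k : ℝ) * (l : ℝ)) * ((p i : ℝ) * (q i : ℝ)) := by
        intro i
        simp only [Pi.add_apply, Pi.smul_apply, smul_eq_mul]
        push_cast
        ring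
      rw [Finset.sum_congr rfl fun i _ => h1 i]
      simp only [Finset.sum_add_distrib, ← Finset.mul_sum]
      rfl
    have hfinal : ∀ (k l : ℤ), Sm / 4 ≤ (∑ i, (((m + k • p + l • q) i : ℝ)) ^ 2) →
        inorm m / 2 ≤ inorm ((zpowM (dual A) k * zpowM (dual B) l).mulVec m) := by
      intro k l hS
      rw [hvec k l]
      exact sqrt_half_le hSmnn hS
    rcases quad_bound Sm Sp Sq dmp dmq dpq hSmnn hSpnn hSqnn hcs1 hcs2 hlowp hlown hpm
      with H | H
    · left
      intro k l hl
      refine hfinal k l ?_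
      rw [expand k l]
      exact H (k : ℝ) (l : ℝ) (by exact_mod_cast hl)
    · right
      intro k l hl
      refine hfinal k l ?_
      rw [expand k l]
      exact H (k : ℝ) (l : ℝ) (by exact_mod_cast hl)
  · -- `Â B̂ m ≠ 0`: the action is locked, contradiction
    exfalso
    apply hunlocked
    set u : IVec d := (hat A).mulVec q with hudef
    have hhatcomm : hat A * hat B = hat B * hat A :=
      commute_hat (commute_dual hA2 hBd hdB hcomm)
    have hBfix : ∀ v : IVec d, (hat B).mulVec v = 0 → B.transpose.mulVec v = v := by
      intro v hv
      have hdv : (dual B).mulVec v = v := by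
        rw [dual_eq_hat_add_one, Matrix.add_mulVec, Matrix.one_mulVec, hv, zero_add]
      calc B.transpose.mulVec v = B.transpose.mulVec ((dual B).mulVec v) := by rw [hdv]
        _ = (B.transpose * dual B).mulVec v := Matrix.mulVec_mulVec _ _ _
        _ = v := by rw [hBd, Matrix.one_mulVec]
    have hAu : A.transpose.mulVec u = u := by
      have h1 : (hat A).mulVec u = 0 := by
        rw [hudef, Matrix.mulVec_mulVec, hAsq, Matrix.zero_mulVec]
      rw [hatA_eq hA2, Matrix.sub_mulVec, Matrix.one_mulVec, sub_eq_zero] at h1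
      exact h1.symm
    have hBhatu : (hat B).mulVec u = 0 := by
      rw [hudef, Matrix.mulVec_mulVec, ← hhatcomm, ← Matrix.mulVec_mulVec, hq0,
        Matrix.mulVec_zero]
    have hBu : B.transpose.mulVec u = u := hBfix u hBhatu
    have hBq : B.transpose.mulVec q = q := hBfix q hq0
    have hAq : A.transpose.mulVec q = q - u := by
      have h1 : (hat A).mulVec q = u := hudef.symm
      rw [hatA_eq hA2, Matrix.sub_mulVec, Matrix.one_mulVec] at h1
      rw [← h1]
      abel
    have hBp : (hat B).mulVec p = u := by
      calc (hat B).mulVec p = ((hat B) * (hat A)).mulVec m := by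
            rw [hp, Matrix.mulVec_mulVec]
        _ = ((hat A) * (hat B)).mulVec m := by rw [hhatcomm]
        _ = (hat A).mulVec q := by rw [← Matrix.mulVec_mulVec, ← hq]
        _ = u := hudef.symm
    have hAp : A.transpose.mulVec p = p := by
      have h1 : (hat A).mulVec p = 0 := by
        rw [hp, Matrix.mulVec_mulVec, hAsq, Matrix.zero_mulVec]
      rw [hatA_eq hA2, Matrix.sub_mulVec, Matrix.one_mulVec, sub_eq_zero] at h1
      exact h1.symm
    have hAw : A.transpose.mulVec (p + u) = p + u := by
      rw [Matrix.mulVec_add, hAp, hAu]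
    have hBw : B.transpose.mulVec (p + u) = p := by
      have hdp : (dual B).mulVec p = p + u := by
        rw [dual_eq_hat_add_one, Matrix.add_mulVec, Matrix.one_mulVec, hBp, add_comm]
      calc B.transpose.mulVec (p + u) = B.transpose.mulVec ((dual B).mulVec p) := by
            rw [hdp]
        _ = (B.transpose * dual B).mulVec p := Matrix.mulVec_mulVec _ _ _
        _ = p := by rw [hBd, Matrix.one_mulVec]
    have hpairs : ∀ α' β' : Vec d, TAB A B α' β' →
        (∑ i, (u i : ℝ) * α' i) = 0 ∧ (∑ i, (u i : ℝ) * β' i) = 0 := by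
      intro α' β' hT
      unfold TAB at hT
      have hqpair : ∑ i, (q i : ℝ) * ((rmat (A - 1)).mulVec β') i
          = ∑ i, (q i : ℝ) * ((rmat (B - 1)).mulVec α') i := by rw [hT]
      rw [pair_mulVec, pair_mulVec] at hqpair
      have hAq' : (A - 1).transpose.mulVec q = -u := by
        rw [Matrix.transpose_sub, Matrix.transpose_one, Matrix.sub_mulVec,
          Matrix.one_mulVec, hAq]
        abel
      have hBq' : (B - 1).transpose.mulVec q = 0 := by
        rw [Matrix.transpose_sub, Matrix.transpose_one, Matrix.sub_mulVec,
          Matrix.one_mulVec, hBq, sub_self]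
      rw [hAq', hBq'] at hqpair
      simp only [Pi.neg_apply, Pi.zero_apply, Int.cast_neg, Int.cast_zero, neg_mul,
        zero_mul, Finset.sum_neg_distrib, Finset.sum_const_zero, neg_eq_zero] at hqpair
      have hwpair : ∑ i, (((p + u) i : ℝ)) * ((rmat (A - 1)).mulVec β') i
          = ∑ i, (((p + u) i : ℝ)) * ((rmat (B - 1)).mulVec α') i := by rw [hT]
      rw [pair_mulVec, pair_mulVec] at hwpair
      have hAw' : (A - 1).transpose.mulVec (p + u) = 0 := by
        rw [Matrix.transpose_sub, Matrix.transpose_one, Matrix.sub_mulVec,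
          Matrix.one_mulVec, hAw, sub_self]
      have hBw' : (B - 1).transpose.mulVec (p + u) = -u := by
        rw [Matrix.transpose_sub, Matrix.transpose_one, Matrix.sub_mulVec,
          Matrix.one_mulVec, hBw]
        abel
      rw [hAw', hBw'] at hwpair
      simp only [Pi.neg_apply, Pi.zero_apply, Int.cast_neg, Int.cast_zero, neg_mul,
        zero_mul, Finset.sum_neg_distrib, Finset.sum_const_zero, neg_eq_zero] at hwpair
      constructor
      · linarith [hwpair]
      · linarith [hqpair]
    exact isLocked_of_fixed u hu hAu hBu hpairs

end ParabolicKAM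
end

section
/- Let ⟨a,b⟩ be an unlocked parabolic affine ℤ²-action with a = A+α step-2. There exists a constant c = c(A,B) > 0 such that for any non-resonant m ∈ C₃ with s(m) ≥ 3, the following holds: for all k ∈ ℤ and either for all l ≥ 0 or for all l < 0, one has |Ā^kB̄^l m| ≥ c|l|. -/
open MeasureTheory

namespace ParabolicKAM

/-! ### Auxiliary material for the proof of `linear_drift_in_l` -/

/-- Frobenius-type norm of an integer matrix. -/
noncomputable def fnorm {d : ℕ} (M : Mat d) : ℝ :=
  Real.sqrt (∑ i, ∑ j, ((M i j : ℝ)) ^ 2)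

lemma inorm_nonneg {d : ℕ} (m : IVec d) : 0 ≤ inorm m := Real.sqrt_nonneg _

lemma fnorm_nonneg {d : ℕ} (M : Mat d) : 0 ≤ fnorm M := Real.sqrt_nonneg _

lemma mulVec_zsmul {d : ℕ} (M : Mat d) (b : ℤ) (v : IVec d) :
    M.mulVec (b • v) = b • M.mulVec v := by
  ext i
  simp only [Matrix.mulVec, dotProduct, Pi.smul_apply, smul_eq_mul, Finset.mul_sum]
  exact Finset.sum_congr rfl fun jj _ => by ring

lemma inorm_mulVec_le {d : ℕ} (M : Mat d) (x : IVec d) :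
    inorm (M.mulVec x) ≤ fnorm M * inorm x := by
  have hrow : ∀ i, ((M.mulVec x i : ℤ) : ℝ) = ∑ jj, (M i jj : ℝ) * (x jj : ℝ) := by
    intro i
    simp only [Matrix.mulVec, dotProduct]
    push_cast
    rfl
  have key : (∑ i, ((M.mulVec x i : ℤ) : ℝ) ^ 2)
      ≤ (∑ i, ∑ jj, (M i jj : ℝ) ^ 2) * (∑ jj, (x jj : ℝ) ^ 2) := by
    calc ∑ i, ((M.mulVec x i : ℤ) : ℝ) ^ 2
        = ∑ i, (∑ jj, (M i jj : ℝ) * (x jj : ℝ)) ^ 2 :=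
          Finset.sum_congr rfl fun i _ => by rw [hrow]
      _ ≤ ∑ i, ((∑ jj, (M i jj : ℝ) ^ 2) * (∑ jj, (x jj : ℝ) ^ 2)) :=
          Finset.sum_le_sum fun i _ => Finset.sum_mul_sq_le_sq_mul_sq _ _ _
      _ = (∑ i, ∑ jj, (M i jj : ℝ) ^ 2) * (∑ jj, (x jj : ℝ) ^ 2) :=
          (Finset.sum_mul _ _ _).symm
  calc inorm (M.mulVec x) = Real.sqrt (∑ i, ((M.mulVec x i : ℤ) : ℝ) ^ 2) := rfl
    _ ≤ Real.sqrt ((∑ i, ∑ jj, (M i jj : ℝ) ^ 2) * (∑ jj, (x jj : ℝ) ^ 2)) :=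
        Real.sqrt_le_sqrt key
    _ = fnorm M * inorm x := by
        rw [Real.sqrt_mul (by positivity)]
        rfl

lemma inorm_pow_mulVec_le {d : ℕ} (M : Mat d) (j : ℕ) (x : IVec d) :
    inorm ((M ^ j).mulVec x) ≤ (1 + fnorm M) ^ j * inorm x := by
  induction j generalizing x with
  | zero => simp [Matrix.one_mulVec]
  | succ n ih =>
    have h1 : (M ^ (n + 1)).mulVec x = (M ^ n).mulVec (M.mulVec x) := by
      rw [Matrix.mulVec_mulVec, ← pow_succ]
    rw [h1]
    have h2 := ih (M.mulVec x)
    have h3 : inorm (M.mulVec x) ≤ (1 + fnorm M) * inorm x := by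
      have := inorm_mulVec_le M x
      nlinarith [inorm_nonneg x, fnorm_nonneg M]
    calc inorm ((M ^ n).mulVec (M.mulVec x))
        ≤ (1 + fnorm M) ^ n * inorm (M.mulVec x) := h2
      _ ≤ (1 + fnorm M) ^ n * ((1 + fnorm M) * inorm x) := by
          apply mul_le_mul_of_nonneg_left h3
          exact pow_nonneg (by linarith [fnorm_nonneg M]) n
      _ = (1 + fnorm M) ^ (n + 1) * inorm x := by ring
  
lemma abs_le_inorm {d : ℕ} (y : IVec d) (L : ℤ) (h : L ^ 2 ≤ ∑ i, (y i) ^ 2) :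
    |(L : ℝ)| ≤ inorm y := by
  unfold inorm
  rw [← Real.sqrt_sq_eq_abs]
  apply Real.sqrt_le_sqrt
  have h' : ((L ^ 2 : ℤ) : ℝ) ≤ ((∑ i, (y i) ^ 2 : ℤ) : ℝ) := by exact_mod_cast h
  push_cast at h'
  exact h'

lemma natpow_mulVec {d : ℕ} (C : Mat d) (y : IVec d)
    (hy : (C - 1).mulVec ((C - 1).mulVec y) = 0) (n : ℕ) :
    (C ^ n).mulVec y = y + (n : ℤ) • (C - 1).mulVec y := by
  induction n with
  | zero => simp [Matrix.one_mulVec]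
  | succ n ih =>
    have hCz : ∀ z : IVec d, C.mulVec z = z + (C - 1).mulVec z := by
      intro z
      conv_lhs => rw [show C = 1 + (C - 1) by abel]
      rw [Matrix.add_mulVec, Matrix.one_mulVec]
    rw [pow_succ', ← Matrix.mulVec_mulVec, ih, hCz,
      Matrix.mulVec_add, mulVec_zsmul, hy, smul_zero, add_zero]
    push_cast
    rw [add_smul, one_smul]
    abel

lemma zpowM_mulVec {d : ℕ} (C : Mat d) (hC : IsUnit C.det) (x : IVec d)
    (hx : (C - 1).mulVec ((C - 1).mulVec x) = 0) (l : ℤ) :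
    (zpowM C l).mulVec x = x + l • (C - 1).mulVec x := by
  cases l with
  | ofNat n =>
    show (C ^ n).mulVec x = _
    rw [natpow_mulVec C x hx n]
    norm_num
  | negSucc n =>
    show ((C ^ (n + 1))⁻¹).mulVec x = _
    set y : IVec d := x + (Int.negSucc n) • (C - 1).mulVec x with hy
    have hDy : (C - 1).mulVec y = (C - 1).mulVec x := by
      rw [hy, Matrix.mulVec_add, mulVec_zsmul, hx, smul_zero, add_zero]
    have h2 : (C - 1).mulVec ((C - 1).mulVec y) = 0 := by rw [hDy, hx]
    have h3 : (C ^ (n + 1)).mulVec y = x := by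
      rw [natpow_mulVec C y h2, hDy, hy, add_assoc, ← add_smul]
      have hz : (Int.negSucc n) + ((n + 1 : ℕ) : ℤ) = 0 := by
        rw [Int.negSucc_eq]
        push_cast
        ring
      rw [hz, zero_smul, add_zero]
    have hdet : IsUnit ((C ^ (n + 1)).det) := by
      rw [Matrix.det_pow]
      exact hC.pow _
    calc ((C ^ (n + 1))⁻¹).mulVec x
        = ((C ^ (n + 1))⁻¹).mulVec ((C ^ (n + 1)).mulVec y) := by rw [h3]
      _ = (((C ^ (n + 1))⁻¹ * C ^ (n + 1))).mulVec y := Matrix.mulVec_mulVec _ _ _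
      _ = y := by rw [Matrix.nonsing_inv_mul _ hdet, Matrix.one_mulVec]

lemma commute_inv {d : ℕ} (C D : Mat d) (h : Commute C D) (hC : IsUnit C.det) :
    Commute C⁻¹ D := by
  have h1 := Matrix.nonsing_inv_mul C hC
  have h2 := Matrix.mul_nonsing_inv C hC
  show C⁻¹ * D = D * C⁻¹
  calc C⁻¹ * D = C⁻¹ * D * 1 := (mul_one _).symm
    _ = C⁻¹ * D * (C * C⁻¹) := by rw [h2]
    _ = C⁻¹ * (D * C) * C⁻¹ := by simp only [mul_assoc]
    _ = C⁻¹ * (C * D) * C⁻¹ := by rw [← h.eq]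
    _ = (C⁻¹ * C) * (D * C⁻¹) := by simp only [mul_assoc]
    _ = D * C⁻¹ := by rw [h1, one_mul]

lemma commute_zpowM {d : ℕ} (C D : Mat d) (h : Commute C D) (hC : IsUnit C.det) (l : ℤ) :
    Commute (zpowM C l) D := by
  cases l with
  | ofNat n => exact h.pow_left n
  | negSucc n =>
    show Commute ((C ^ (n + 1))⁻¹) D
    refine commute_inv _ _ (h.pow_left (n + 1)) ?_
    rw [Matrix.det_pow]
    exact hC.pow _

lemma key_formula {d : ℕ} (Ad Bd M₀ : Mat d) (m : IVec d)
    (hAdet : IsUnit Ad.det) (hBdet : IsUnit Bd.det)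
    (hcA : Commute M₀ Ad) (hcB : Commute M₀ Bd)
    (hcAB : Commute (Ad - 1) (Bd - 1))
    (hB2 : (Bd - 1).mulVec ((Bd - 1).mulVec (M₀.mulVec m)) = 0)
    (hA0 : (Ad - 1).mulVec (M₀.mulVec m) = 0)
    (k l : ℤ) :
    M₀.mulVec ((zpowM Ad k * zpowM Bd l).mulVec m)
      = M₀.mulVec m + l • (Bd - 1).mulVec (M₀.mulVec m) := by
  have c1 : Commute (zpowM Ad k) M₀ := commute_zpowM Ad M₀ hcA.symm hAdet k
  have c2 : Commute (zpowM Bd l) M₀ := commute_zpowM Bd M₀ hcB.symm hBdet l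
  have hmat : M₀ * (zpowM Ad k * zpowM Bd l) = zpowM Ad k * (zpowM Bd l * M₀) := by
    rw [← mul_assoc, ← c1.eq, mul_assoc, ← c2.eq]
  rw [Matrix.mulVec_mulVec, hmat, ← Matrix.mulVec_mulVec, ← Matrix.mulVec_mulVec]
  rw [zpowM_mulVec Bd hBdet (M₀.mulVec m) hB2 l]
  have hABv : (Ad - 1).mulVec ((Bd - 1).mulVec (M₀.mulVec m)) = 0 := by
    rw [Matrix.mulVec_mulVec, hcAB.eq, ← Matrix.mulVec_mulVec, hA0, Matrix.mulVec_zero]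
  have hx : (Ad - 1).mulVec (M₀.mulVec m + l • (Bd - 1).mulVec (M₀.mulVec m)) = 0 := by
    rw [Matrix.mulVec_add, mulVec_zsmul, hA0, hABv, smul_zero, add_zero]
  have hx2 : (Ad - 1).mulVec ((Ad - 1).mulVec
      (M₀.mulVec m + l • (Bd - 1).mulVec (M₀.mulVec m))) = 0 := by
    rw [hx, Matrix.mulVec_zero]
  rw [zpowM_mulVec Ad hAdet _ hx2 k, hx, smul_zero, add_zero]

/-- **Lemma (linear drift in `l`, `s(m) ≥ 3`).** Let `⟨a,b⟩` be an unlocked parabolic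
affine action with `a` step-2. There is `c = c(A,B) > 0` such that for any `m ∈ 𝒞₃` with
`s(m) ≥ 3`: for all `k ∈ ℤ` and either for all `l ≥ 0` or for all `l < 0`, one has
`|Ā^k B̄^l m| ≥ c |l|`. -/
theorem linear_drift_in_l (d : ℕ) (A B : Mat d) (α β : Vec d)
    (hA2 : IsStep2 A) (hBpar : IsParabolic B)
    (hcomm : A * B = B * A) (hTAB : TAB A B α β)
    (hunlocked : ¬ IsLocked A B) :
    ∃ c : ℝ, 0 < c ∧
      ∀ (m : IVec d) (s : ℕ), InC3 A B m → 3 ≤ s → stepOf B m s →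
        (∀ k l : ℤ, 0 ≤ l →
            c * |(l : ℝ)| ≤ inorm ((zpowM (dual A) k * zpowM (dual B) l).mulVec m)) ∨
        (∀ k l : ℤ, l < 0 →
            c * |(l : ℝ)| ≤ inorm ((zpowM (dual A) k * zpowM (dual B) l).mulVec m)) := by
  classical
  obtain ⟨hA2sq, _hAne⟩ := hA2
  obtain ⟨S₀, hS₀⟩ := hBpar
  set S : ℕ := S₀ + 1 with hSdef
  have hS : (B - 1) ^ S = 0 := by rw [hSdef, pow_succ, hS₀, zero_mul]
  -- transposed nilpotent parts
  set NA : Mat d := A.transpose - 1 with hNAdef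
  set NB : Mat d := B.transpose - 1 with hNBdef
  have htA : (A - 1).transpose = NA := by rw [Matrix.transpose_sub, Matrix.transpose_one]
  have htB : (B - 1).transpose = NB := by rw [Matrix.transpose_sub, Matrix.transpose_one]
  have hNA2 : NA * NA = 0 := by
    have h1 : ((A - 1) ^ 2).transpose = (0 : Mat d) := by rw [hA2sq, Matrix.transpose_zero]
    rw [Matrix.transpose_pow, htA, sq] at h1
    exact h1
  have hNBS : NB ^ S = 0 := by
    have h1 : ((B - 1) ^ S).transpose = (0 : Mat d) := by rw [hS, Matrix.transpose_zero]
    rw [Matrix.transpose_pow, htB] at h1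
    exact h1
  have hAt : A.transpose = 1 + NA := by rw [hNAdef]; abel
  have hBt : B.transpose = 1 + NB := by rw [hNBdef]; abel
  -- dual of A
  have hWA : (1 + NA) * (1 - NA) = 1 := by
    have h1 : (1 + NA) * (1 - NA) = 1 - NA * NA := by noncomm_ring
    rw [h1, hNA2, sub_zero]
  have hWA' : (1 - NA) * (1 + NA) = 1 := mul_eq_one_comm.mp hWA
  have hdualA : dual A = 1 - NA := by
    show A.transpose⁻¹ = 1 - NA
    rw [hAt]
    exact Matrix.inv_eq_right_inv hWA
  have hhatA : hat A = -NA := by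
    show dual A - 1 = -NA
    rw [hdualA]; abel
  have hhatA2 : hat A * hat A = 0 := by
    rw [hhatA, neg_mul_neg, hNA2]
  -- dual of B
  set W : Mat d := ∑ i ∈ Finset.range S, (-NB) ^ i with hWdef
  have hnegNBS : (-NB) ^ S = 0 := by
    rw [neg_pow, hNBS, mul_zero]
  have hWmul : W * (1 + NB) = 1 := by
    have h1 : W * ((-NB) - 1) = (-NB) ^ S - 1 := geom_sum_mul (-NB) S
    rw [hnegNBS] at h1
    have h2 : W * (1 + NB) = -(W * ((-NB) - 1)) := by noncomm_ring
    rw [h2, h1]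
    abel
  have hWmul' : (1 + NB) * W = 1 := mul_eq_one_comm.mp hWmul
  have hdualB : dual B = W := by
    show B.transpose⁻¹ = W
    rw [hBt]
    exact Matrix.inv_eq_right_inv hWmul'
  have hhatB : hat B = W - 1 := by
    show dual B - 1 = W - 1
    rw [hdualB]
  -- commutation relations
  have cAtBt : Commute A.transpose B.transpose := by
    have h := congrArg Matrix.transpose hcomm
    rw [Matrix.transpose_mul, Matrix.transpose_mul] at h
    exact h.symm
  have cNANB : Commute NA NB := by
    rw [hNAdef, hNBdef]
    exact (cAtBt.sub_right (Commute.one_right _)).sub_left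
      ((Commute.one_left _).sub_right (Commute.one_left _))
  have cNAW : Commute NA W := by
    rw [hWdef]
    exact Commute.sum_right _ _ _ fun i _ => (cNANB.neg_right).pow_right i
  have cNBW : Commute NB W := by
    rw [hWdef]
    exact Commute.sum_right _ _ _ fun i _ => ((Commute.refl NB).neg_right).pow_right i
  have cAB : Commute (hat A) (hat B) := by
    rw [hhatA, hhatB]
    exact ((cNAW).sub_right (Commute.one_right _)).neg_left
  have cA_dA : Commute (hat A) (dual A) := by
    rw [hhatA, hdualA]
    exact (((Commute.one_right NA).sub_right (Commute.refl NA))).neg_left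
  have cB_dA : Commute (hat B) (dual A) := by
    rw [hhatB, hdualA]
    exact ((Commute.one_right W).sub_right cNAW.symm).sub_left
      ((Commute.one_left _).sub_right (Commute.one_left _))
  have cA_dB : Commute (hat A) (dual B) := by
    rw [hhatA, hdualB]
    exact cNAW.neg_left
  have cB_dB : Commute (hat B) (dual B) := by
    rw [hhatB, hdualB]
    exact (Commute.refl W).sub_left (Commute.one_left _)
  -- determinants are units
  have hAdet : IsUnit (dual A).det := by
    have h1 : dual A * A.transpose = 1 := by rw [hdualA, hAt]; exact hWA'
    have h2 := congrArg Matrix.det h1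
    rw [Matrix.det_mul, Matrix.det_one] at h2
    exact IsUnit.of_mul_eq_one _ h2
  have hBdet : IsUnit (dual B).det := by
    have h1 : dual B * B.transpose = 1 := by rw [hdualB, hBt]; exact hWmul
    have h2 := congrArg Matrix.det h1
    rw [Matrix.det_mul, Matrix.det_one] at h2
    exact IsUnit.of_mul_eq_one _ h2
  -- (hat B) ^ S = 0
  have hhatBpow : (hat B) ^ S = 0 := by
    have hWB : W - 1 = W * (-NB) := by
      calc W - 1 = W - W * (1 + NB) := by rw [hWmul]
        _ = W * (-NB) := by noncomm_ring
    have cWnNB : Commute W (-NB) := cNBW.symm.neg_right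
    rw [hhatB, hWB, cWnNB.mul_pow, hnegNBS, mul_zero]
  -- the uniform constant
  set K : ℝ := (1 + fnorm (hat A)) * (1 + fnorm (hat B)) ^ S with hKdef
  have hfA : (0:ℝ) ≤ fnorm (hat A) := fnorm_nonneg _
  have hfB : (0:ℝ) ≤ fnorm (hat B) := fnorm_nonneg _
  have hKpos : 0 < K := by
    rw [hKdef]
    have h1 : (0:ℝ) < 1 + fnorm (hat A) := by linarith
    have h2 : (0:ℝ) < 1 + fnorm (hat B) := by linarith
    exact mul_pos h1 (pow_pos h2 S)
  refine ⟨K⁻¹, inv_pos.mpr hKpos, ?_⟩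
  intro m s _hm _hs3 hstep
  obtain ⟨hs0, hsmin⟩ := hstep
  have hsS : s ≤ S := hsmin S (by rw [hhatBpow]; exact Matrix.zero_mulVec m)
  have hs3' : 3 ≤ s := _hs3
  obtain ⟨t, rfl⟩ : ∃ t, s = t + 3 := ⟨s - 3, by omega⟩
  have hbs : ((hat B) ^ (t + 3)).mulVec m = 0 := hs0
  have hbs2 : ((hat B) ^ (t + 2)).mulVec m ≠ 0 := by
    intro h0
    have := hsmin (t + 2) h0
    omega
  have hstepv : ∀ j : ℕ, (hat B).mulVec (((hat B) ^ j).mulVec m)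
      = ((hat B) ^ (j + 1)).mulVec m := by
    intro j
    rw [Matrix.mulVec_mulVec, ← pow_succ']
  have hswapM : ∀ j : ℕ, hat B * (hat A * (hat B) ^ j) = hat A * (hat B) ^ (j + 1) := by
    intro j
    rw [← mul_assoc, ← cAB.eq, mul_assoc, ← pow_succ']
  -- select the killing matrix M₀ = (hat A)^e * (hat B)^j
  obtain ⟨e, j, he, hj, hA0, hB2, hne⟩ :
      ∃ e j : ℕ, e ≤ 1 ∧ j ≤ S ∧
        (hat A).mulVec (((hat A) ^ e * (hat B) ^ j).mulVec m) = 0 ∧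
        (hat B).mulVec ((hat B).mulVec (((hat A) ^ e * (hat B) ^ j).mulVec m)) = 0 ∧
        (hat B).mulVec (((hat A) ^ e * (hat B) ^ j).mulVec m) ≠ 0 := by
    have F1 : ∀ j : ℕ, (hat A * (hat B) ^ j).mulVec m
        = (hat A).mulVec (((hat B) ^ j).mulVec m) :=
      fun j => (Matrix.mulVec_mulVec m (hat A) ((hat B) ^ j)).symm
    have F2 : ∀ v : IVec d, (hat B).mulVec ((hat A).mulVec v)
        = (hat A).mulVec ((hat B).mulVec v) := by
      intro v
      rw [Matrix.mulVec_mulVec, Matrix.mulVec_mulVec, cAB.symm.eq]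
    by_cases hp1 : (hat A).mulVec (((hat B) ^ (t + 1)).mulVec m) = 0
    · refine ⟨0, t + 1, by norm_num, by omega, ?_, ?_, ?_⟩
      · simpa only [pow_zero, one_mul] using hp1
      · simp only [pow_zero, one_mul]
        rw [hstepv, hstepv]
        exact hbs
      · simp only [pow_zero, one_mul]
        rw [hstepv]
        exact hbs2
    · by_cases hq1 : (hat A).mulVec (((hat B) ^ (t + 2)).mulVec m) = 0
      · -- e = 1, j = t
        refine ⟨1, t, le_refl 1, by omega, ?_, ?_, ?_⟩
        · rw [pow_one, Matrix.mulVec_mulVec, ← mul_assoc, hhatA2, zero_mul,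
            Matrix.zero_mulVec]
        · simp only [pow_one]
          rw [F1, F2, F2, hstepv, hstepv]
          exact hq1
        · simp only [pow_one]
          rw [F1, F2, hstepv]
          exact hp1
      · -- e = 1, j = t + 1
        refine ⟨1, t + 1, le_refl 1, by omega, ?_, ?_, ?_⟩
        · rw [pow_one, Matrix.mulVec_mulVec, ← mul_assoc, hhatA2, zero_mul,
            Matrix.zero_mulVec]
        · simp only [pow_one]
          rw [F1, F2, F2, hstepv, hstepv]
          show (hat A).mulVec (((hat B) ^ (t + 3)).mulVec m) = 0
          rw [hbs]
          exact Matrix.mulVec_zero _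
        · simp only [pow_one]
          rw [F1, F2, hstepv]
          exact hq1
  set M₀ : Mat d := (hat A) ^ e * (hat B) ^ j with hM₀def
  set w : IVec d := M₀.mulVec m with hwdef
  set bw : IVec d := (hat B).mulVec w with hbwdef
  -- the key formula
  have hcA : Commute M₀ (dual A) := (cA_dA.pow_left e).mul_left (cB_dA.pow_left j)
  have hcB : Commute M₀ (dual B) := (cA_dB.pow_left e).mul_left (cB_dB.pow_left j)
  have hcAB' : Commute (dual A - 1) (dual B - 1) := cAB
  have hMform : ∀ k l : ℤ,
      M₀.mulVec ((zpowM (dual A) k * zpowM (dual B) l).mulVec m) = w + l • bw :=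
    fun k l => key_formula (dual A) (dual B) M₀ m hAdet hBdet hcA hcB hcAB' hB2 hA0 k l
  -- norm bound for M₀
  have hbound : ∀ x : IVec d, inorm (M₀.mulVec x) ≤ K * inorm x := by
    intro x
    have h1 : M₀.mulVec x = ((hat A) ^ e).mulVec (((hat B) ^ j).mulVec x) := by
      rw [Matrix.mulVec_mulVec]
    have hfA1 : (1:ℝ) ≤ 1 + fnorm (hat A) := by linarith
    have hfB1 : (1:ℝ) ≤ 1 + fnorm (hat B) := by linarith
    have he' : (1 + fnorm (hat A)) ^ e ≤ 1 + fnorm (hat A) := by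
      calc (1 + fnorm (hat A)) ^ e ≤ (1 + fnorm (hat A)) ^ 1 :=
            pow_le_pow_right₀ hfA1 he
        _ = 1 + fnorm (hat A) := pow_one _
    have hj' : (1 + fnorm (hat B)) ^ j ≤ (1 + fnorm (hat B)) ^ S :=
      pow_le_pow_right₀ hfB1 hj
    rw [h1]
    calc inorm (((hat A) ^ e).mulVec (((hat B) ^ j).mulVec x))
        ≤ (1 + fnorm (hat A)) ^ e * inorm (((hat B) ^ j).mulVec x) :=
          inorm_pow_mulVec_le _ _ _
      _ ≤ (1 + fnorm (hat A)) ^ e * ((1 + fnorm (hat B)) ^ j * inorm x) := by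
          apply mul_le_mul_of_nonneg_left (inorm_pow_mulVec_le _ _ _)
          positivity
      _ ≤ (1 + fnorm (hat A)) * ((1 + fnorm (hat B)) ^ S * inorm x) := by
          apply mul_le_mul he' _ _ (by linarith)
          · exact mul_le_mul_of_nonneg_right hj' (inorm_nonneg x)
          · have : (0:ℝ) ≤ (1 + fnorm (hat B)) ^ j := by positivity
            exact mul_nonneg this (inorm_nonneg x)
      _ = K * inorm x := by rw [hKdef, mul_assoc]
  -- quadratic expansion
  have hQ : (1 : ℤ) ≤ ∑ i, (bw i) ^ 2 := by
    obtain ⟨i₀, hi₀⟩ := Function.ne_iff.mp hne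
    have hi₀' : bw i₀ ≠ 0 := by simpa using hi₀
    have h1 : (1 : ℤ) ≤ |bw i₀| := Int.one_le_abs hi₀'
    have h2 : (1 : ℤ) ≤ (bw i₀) ^ 2 := by nlinarith [sq_abs (bw i₀)]
    calc (1:ℤ) ≤ (bw i₀) ^ 2 := h2
      _ ≤ ∑ i, (bw i) ^ 2 :=
          Finset.single_le_sum (fun i _ => sq_nonneg (bw i)) (Finset.mem_univ i₀)
  have hWnn : (0 : ℤ) ≤ ∑ i, (w i) ^ 2 := Finset.sum_nonneg fun i _ => sq_nonneg _
  set cr : ℤ := ∑ i, w i * bw i with hcrdef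
  have hsum : ∀ l : ℤ, ∑ i, (w i + l * bw i) ^ 2
      = (∑ i, (w i) ^ 2) + 2 * l * cr + l ^ 2 * (∑ i, (bw i) ^ 2) := by
    intro l
    rw [hcrdef, Finset.mul_sum, Finset.mul_sum, ← Finset.sum_add_distrib,
      ← Finset.sum_add_distrib]
    exact Finset.sum_congr rfl fun i _ => by ring
  have hmain : ∀ l : ℤ, 0 ≤ l * cr → ∀ k : ℤ,
      K⁻¹ * |(l : ℝ)| ≤ inorm ((zpowM (dual A) k * zpowM (dual B) l).mulVec m) := by
    intro l hl k
    set X : IVec d := (zpowM (dual A) k * zpowM (dual B) l).mulVec m with hXdef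
    have h1 : M₀.mulVec X = w + l • bw := hMform k l
    have h2 : l ^ 2 ≤ ∑ i, ((w + l • bw) i) ^ 2 := by
      have hco : ∀ i, (w + l • bw) i = w i + l * bw i := fun i => rfl
      have h3 : ∑ i, ((w + l • bw) i) ^ 2 = ∑ i, (w i + l * bw i) ^ 2 :=
        Finset.sum_congr rfl fun i _ => by rw [hco]
      rw [h3, hsum l]
      nlinarith [sq_nonneg l]
    have h3 : |(l : ℝ)| ≤ inorm (w + l • bw) := abs_le_inorm _ l h2
    have h4 : inorm (w + l • bw) ≤ K * inorm X := by
      rw [← h1]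
      exact hbound X
    have h5 : |(l : ℝ)| ≤ K * inorm X := h3.trans h4
    calc K⁻¹ * |(l : ℝ)| ≤ K⁻¹ * (K * inorm X) :=
          mul_le_mul_of_nonneg_left h5 (by positivity)
      _ = inorm X := by
          rw [← mul_assoc, inv_mul_cancel₀ (ne_of_gt hKpos), one_mul]
  rcases le_or_gt 0 cr with hcr0 | hcr0
  · left
    intro k l hl
    exact hmain l (mul_nonneg hl hcr0) k
  · right
    intro k l hl
    exact hmain l (le_of_lt (mul_pos_of_neg_of_neg hl hcr0)) k

end ParabolicKAM
end
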